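/- Let d ≥ 3 be an integer, a_c = (d−2)/2, and let (a,b) ∈ ℝ² satisfy a ≤ b < a+1 and a < a_c. Set n = d/(1+a−b) and α = (a_c−a)(a+1−b)/(a_c−a+b), so α > 0. Define ψ(x) = (1−|x|^{2α})/2 and U = log ψ on the punctured open unit ball B∖{0} of ℝ^d. Then for every x with 0 < |x| < 1, |x|^{2(1−α)} [ ΔU(x) − (2a/|x|²) x·∇U(x) ] − ((n−2)/2) |x|^{2(1−α)} |∇U(x)|² = −nα² / (2 ψ(x)²), where Δ is the Euclidean Laplacian and ∇ the Euclidean gradient. -/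

import Mathlib

open Real Filter Topology
open scoped RealInnerProductSpace

/-!
`U` is radial: `U x = f (‖x‖ ^ 2)` with `f t = log ((1 - t ^ α) / 2)`. For any such function on
`ℝ^d` one has `∇U = 2 f'(s) x` and `ΔU = 2 d f'(s) + 4 s f''(s)` with `s = ‖x‖ ^ 2`, so the claim
becomes a rational identity in `s` and `s ^ α`, which holds exactly because the exponents are
tied by `(n - 2) α = d - 2 - 2 a`.
-/

section RadialFunctions

variable {E : Type*} [NormedAddCommGroup E] [InnerProductSpace ℝ E] {f f' : ℝ → ℝ} {c : ℝ}
  {x : E}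

theorem HasDerivAt.hasFDerivAt_comp_norm_sq (hf : HasDerivAt f c (‖x‖ ^ 2)) :
    HasFDerivAt (fun y => f (‖y‖ ^ 2)) ((2 * c) • innerSL ℝ x) x := by
  have h := hf.comp_hasFDerivAt x (hasStrictFDerivAt_norm_sq x).hasFDerivAt
  rwa [← Nat.cast_smul_eq_nsmul ℝ, smul_smul, Nat.cast_ofNat, mul_comm c] at h

theorem HasDerivAt.hasGradientAt_comp_norm_sq [CompleteSpace E] (hf : HasDerivAt f c (‖x‖ ^ 2)) :
    HasGradientAt (fun y => f (‖y‖ ^ 2)) ((2 * c) • x) x := by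
  rw [hasGradientAt_iff_hasFDerivAt, map_smul]
  exact hf.hasFDerivAt_comp_norm_sq

theorem fderiv_fderiv_comp_norm_sq_apply (v : E)
    (hf : ∀ᶠ t in 𝓝 (‖x‖ ^ 2), HasDerivAt f (f' t) t) (hf' : HasDerivAt f' c (‖x‖ ^ 2)) :
    fderiv ℝ (fun y => fderiv ℝ (fun z => f (‖z‖ ^ 2)) y v) x v =
      2 * f' (‖x‖ ^ 2) * ‖v‖ ^ 2 + 4 * c * ⟪x, v⟫ ^ 2 := by
  have hnear : ∀ᶠ y in 𝓝 x, HasDerivAt f (f' (‖y‖ ^ 2)) (‖y‖ ^ 2) :=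
    (by fun_prop : Continuous fun y : E => ‖y‖ ^ 2).continuousAt.eventually hf
  have hdir : (fun y => fderiv ℝ (fun z => f (‖z‖ ^ 2)) y v) =ᶠ[𝓝 x]
      fun y => 2 * f' (‖y‖ ^ 2) * innerSL ℝ v y := by
    filter_upwards [hnear] with y hy
    rw [hy.hasFDerivAt_comp_norm_sq.fderiv]
    simp [real_inner_comm, mul_assoc]
  have hderiv : HasFDerivAt (fun y => 2 * f' (‖y‖ ^ 2) * innerSL ℝ v y) _ x :=
    (hf'.hasFDerivAt_comp_norm_sq.const_mul 2).mul (innerSL ℝ v).hasFDerivAt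
  rw [hdir.fderiv_eq, hderiv.fderiv]
  simp only [add_apply, smul_apply, smul_eq_mul,
    coe_innerSL_apply, real_inner_self_eq_norm_sq, real_inner_comm v x]
  ring

end RadialFunctions

/-- The Euclidean Laplacian of a function on `EuclideanSpace ℝ (Fin d)`. -/
noncomputable def euclideanLaplacian {d : ℕ} (u : EuclideanSpace ℝ (Fin d) → ℝ)
    (x : EuclideanSpace ℝ (Fin d)) : ℝ :=
  ∑ i : Fin d, fderiv ℝ (fun y => fderiv ℝ u y (EuclideanSpace.single i 1)) x
    (EuclideanSpace.single i 1)

theorem euclideanLaplacian_comp_norm_sq {d : ℕ} {f f' : ℝ → ℝ} {c : ℝ}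
    {x : EuclideanSpace ℝ (Fin d)}
    (hf : ∀ᶠ t in 𝓝 (‖x‖ ^ 2), HasDerivAt f (f' t) t) (hf' : HasDerivAt f' c (‖x‖ ^ 2)) :
    euclideanLaplacian (fun y => f (‖y‖ ^ 2)) x = 2 * d * f' (‖x‖ ^ 2) + 4 * c * ‖x‖ ^ 2 := by
  simp only [euclideanLaplacian, fderiv_fderiv_comp_norm_sq_apply _ hf hf', PiLp.norm_single,
    EuclideanSpace.inner_single_right, Finset.sum_add_distrib, ← Finset.mul_sum,
    EuclideanSpace.real_norm_sq_eq x, norm_one, one_pow, mul_one, one_mul, conj_trivial,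
    Finset.sum_const, Finset.card_univ, Fintype.card_fin, nsmul_eq_mul]
  ring

theorem hasDerivAt_log_one_sub_rpow_div_two {α t : ℝ} (ht : 0 < t) (h1 : t ^ α ≠ 1) :
    HasDerivAt (fun t => log ((1 - t ^ α) / 2)) (-α * (t ^ α / (t * (1 - t ^ α)))) t := by
  have h := (((hasDerivAt_rpow_const (p := α) (Or.inl ht.ne')).const_sub 1).div_const 2).log
    (by simpa [sub_eq_zero] using h1.symm)
  convert h using 1
  rw [rpow_sub_one ht.ne']
  field_simp [sub_ne_zero.2 h1.symm]

theorem hasDerivAt_rpow_div_mul_one_sub_rpow {α t : ℝ} (ht : 0 < t) (h1 : t ^ α ≠ 1) :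
    HasDerivAt (fun t => t ^ α / (t * (1 - t ^ α)))
      (t ^ α * (α - 1 + t ^ α) / (t ^ 2 * (1 - t ^ α) ^ 2)) t := by
  have hpow := hasDerivAt_rpow_const (p := α) (Or.inl ht.ne')
  have h : HasDerivAt (fun t => t ^ α / (t * (1 - t ^ α))) _ t :=
    hpow.div ((hasDerivAt_id t).mul (hpow.const_sub 1))
      (mul_ne_zero ht.ne' (sub_ne_zero.2 h1.symm))
  convert h using 1
  rw [rpow_sub_one ht.ne', id]
  field_simp [sub_ne_zero.2 h1.symm]
  ring

theorem conformal_exponent_relation {d a b : ℝ} (hb : 1 + a - b ≠ 0)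
    (hD : (d - 2) / 2 - a + b ≠ 0) :
    (d / (1 + a - b) - 2) * (((d - 2) / 2 - a) * (a + 1 - b) / ((d - 2) / 2 - a + b)) =
      d - 2 - 2 * a := by
  rw [div_sub' hb, div_mul_div_comm, div_eq_iff (mul_ne_zero hb hD)]
  ring

/-- Key conformal computation: L̂U - ((n-2)/2)Γ̂(U) = -nα²/(2ψ²) for U = log ψ,
ψ = (1-|x|^{2α})/2, on the punctured unit ball. -/
theorem conformal_identity_hyperbolic (d : ℕ) (hd : 3 ≤ d) (a b n α : ℝ)
    (hab : a ≤ b) (hba : b < a + 1) (ha : a < ((d : ℝ) - 2) / 2)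
    (hn : n = (d : ℝ) / (1 + a - b))
    (hα : α = (((d : ℝ) - 2) / 2 - a) * (a + 1 - b) / (((d : ℝ) - 2) / 2 - a + b))
    (U : EuclideanSpace ℝ (Fin d) → ℝ)
    (hU : ∀ x, U x = Real.log ((1 - ‖x‖ ^ (2 * α)) / 2)) :
    ∀ x : EuclideanSpace ℝ (Fin d), 0 < ‖x‖ → ‖x‖ < 1 →
      ‖x‖ ^ (2 * (1 - α)) *
          (euclideanLaplacian U x - 2 * a / ‖x‖ ^ 2 * ⟪x, gradient U x⟫)
        - (n - 2) / 2 * (‖x‖ ^ (2 * (1 - α)) * ‖gradient U x‖ ^ 2) =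
      -(n * α ^ 2) / (2 * ((1 - ‖x‖ ^ (2 * α)) / 2) ^ 2) := by
  intro x hx0 hx1
  have hd3 : (3 : ℝ) ≤ d := by exact_mod_cast hd
  have hα0 : 0 < α := hα ▸ div_pos (mul_pos (by linarith) (by linarith)) (by linarith)
  have hnα : (n - 2) * α = d - 2 - 2 * a :=
    hn ▸ hα ▸ conformal_exponent_relation (by linarith) (by linarith)
  have hrpow (β : ℝ) : ‖x‖ ^ (2 * β) = (‖x‖ ^ 2) ^ β := by
    rw [rpow_mul (norm_nonneg x), rpow_two]
  obtain rfl : U = fun y => log ((1 - (‖y‖ ^ 2) ^ α) / 2) :=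
    funext fun y => by rw [hU, rpow_mul (norm_nonneg y), rpow_two]
  set s := ‖x‖ ^ 2 with hs_def
  have hs : s ∈ Set.Ioo 0 1 := ⟨by positivity, pow_lt_one₀ hx0.le hx1 two_ne_zero⟩
  have hpow_ne_one (t : ℝ) (ht : t ∈ Set.Ioo 0 1) : t ^ α ≠ 1 :=
    (rpow_lt_one ht.1.le ht.2 hα0).ne
  have hf (t : ℝ) (ht : t ∈ Set.Ioo 0 1) :=
    hasDerivAt_log_one_sub_rpow_div_two ht.1 (hpow_ne_one t ht)
  rw [(hf s hs).hasGradientAt_comp_norm_sq.gradient,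
    euclideanLaplacian_comp_norm_sq (mem_of_superset (Ioo_mem_nhds hs.1 hs.2) hf)
      ((hasDerivAt_rpow_div_mul_one_sub_rpow hs.1 (hpow_ne_one s hs)).const_mul (-α)),
    hrpow, hrpow, real_inner_smul_right, real_inner_self_eq_norm_sq, norm_smul, mul_pow,
    Real.norm_eq_abs, sq_abs, rpow_sub hs.1, rpow_one, ← hs_def]
  have hs0 : s ≠ 0 := hs.1.ne'
  have hA0 : s ^ α ≠ 0 := (rpow_pos_of_pos hs.1 α).ne'
  have hA1 : 1 - s ^ α ≠ 0 := sub_ne_zero.2 (hpow_ne_one s hs).symm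
  field_simp
  linear_combination (2 - 2 * s ^ α) * hnα
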